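/- Let G be a Δ-regular finite simple graph of order n and size m with Δ > 0. Then A_{−Δ+2}(G) ≥ m and A_{Δ−2}(G) ≥ n + n₀, where n₀ is the number of cut vertices of G; in particular A_{Δ−2}(G) ≥ n. -/

import Mathlib

open Polynomial Finset

/-- Number of neighbors of `v` inside the set `S` (denoted δ_S(v)). -/
def SimpleGraph.degIn {V : Type*} [Fintype V] [DecidableEq V]
    (G : SimpleGraph V) [DecidableRel G.Adj] (S : Finset V) (v : V) : ℕ :=
  (S.filter (fun u => G.Adj v u)).card

/-- Number of neighbors of `v` outside the set `S` (denoted δ_{S̄}(v)). -/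
def SimpleGraph.degOut {V : Type*} [Fintype V] [DecidableEq V]
    (G : SimpleGraph V) [DecidableRel G.Adj] (S : Finset V) (v : V) : ℕ :=
  (Sᶜ.filter (fun u => G.Adj v u)).card

/-- `S` is an exact defensive `k`-alliance in `G`: the induced subgraph `⟨S⟩` is connected
(in particular `S` is nonempty) and `k = k_S = min_{v ∈ S} (δ_S(v) - δ_{S̄}(v))`. -/
def SimpleGraph.IsExactAlliance {V : Type*} [Fintype V] [DecidableEq V]
    (G : SimpleGraph V) [DecidableRel G.Adj] (S : Finset V) (k : ℤ) : Prop :=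
  (G.induce (S : Set V)).Connected ∧
    (∀ v ∈ S, k ≤ (G.degIn S v : ℤ) - (G.degOut S v : ℤ)) ∧
    (∃ v ∈ S, (G.degIn S v : ℤ) - (G.degOut S v : ℤ) = k)

/-- `A_k(G)`: the number of exact defensive `k`-alliances in `G`. -/
noncomputable def SimpleGraph.allianceCoeff {V : Type*} [Fintype V] [DecidableEq V]
    (G : SimpleGraph V) [DecidableRel G.Adj] (k : ℤ) : ℕ :=
  Set.ncard {S : Finset V | G.IsExactAlliance S k}

/-- The alliance polynomial `A(G;x) = Σ_{k=-Δ}^{Δ} A_k(G) x^{n+k}`, where `n` is the order and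
`Δ` the maximum degree of `G`, regarded as a real polynomial. -/
noncomputable def SimpleGraph.alliancePoly {V : Type*} [Fintype V] [DecidableEq V]
    (G : SimpleGraph V) [DecidableRel G.Adj] : Polynomial ℝ :=
  ∑ k ∈ Finset.Icc (-(G.maxDegree : ℤ)) (G.maxDegree : ℤ),
    (G.allianceCoeff k : ℝ) • X ^ (((Fintype.card V : ℤ) + k).toNat)

/-- `v` is a cut vertex of `G`: removing `v` (and its incident edges) yields a graph with
more connected components than `G`. -/
def SimpleGraph.IsCutVertex {V : Type*} (G : SimpleGraph V) (v : V) : Prop :=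
  Nat.card G.ConnectedComponent <
    Nat.card (G.induce {u : V | u ≠ v}).ConnectedComponent

/-!
Each endpoint of an edge `ab` of a `Δ`-regular graph has one neighbour inside `{a, b}` and
`Δ - 1` outside, so every edge is an exact defensive `(2 - Δ)`-alliance, and distinct edges give
distinct alliances.

For a vertex `v` and a neighbour `u` of `v`, the component of `G - v` containing `u` induces a
connected subgraph whose only outside neighbour is `v`; so each of its vertices has at most one
neighbour outside, and `u` exactly one: it is an exact `(Δ - 2)`-alliance, and it determines `v`.
Every vertex has at least one such component. A cut vertex has two: if all neighbours of `v` lay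
in one component of `G - v`, every walk of `G` through `v` could be rerouted inside `G - v`, so
`G - v` would have no more components than `G`.
-/

theorem Sym2.toFinset_injective {α : Type*} [DecidableEq α] :
    Function.Injective (Sym2.toFinset : Sym2 α → Finset α) :=
  fun _ _ h => Sym2.ext fun x => by rw [← Sym2.mem_toFinset, h, Sym2.mem_toFinset]

namespace SimpleGraph

variable {V : Type*} {G : SimpleGraph V}

section CutVertex

/-- The second conjunct lets the induction pass through `v` by jumping between its neighbours. -/
theorem reachable_induce_ne_of_walk {v b : V}
    (hnbr : ∀ w₁ w₂ (h₁ : G.Adj v w₁) (h₂ : G.Adj v w₂),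
      (G.induce {u | u ≠ v}).Reachable ⟨w₁, h₁.ne'⟩ ⟨w₂, h₂.ne'⟩)
    (hb : b ≠ v) {x : V} (p : G.Walk x b) :
    (∀ hx : x ≠ v, (G.induce {u | u ≠ v}).Reachable ⟨x, hx⟩ ⟨b, hb⟩) ∧
      (x = v → ∀ w (hw : G.Adj v w),
        (G.induce {u | u ≠ v}).Reachable ⟨w, hw.ne'⟩ ⟨b, hb⟩) := by
  induction p with
  | nil => exact ⟨fun _ => .rfl, fun hbv => absurd hbv hb⟩
  | @cons x z _ hxz q ih =>
    obtain ⟨ihz, ihv⟩ := ih hb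
    refine ⟨fun hx => ?_, ?_⟩
    · by_cases hz : z = v
      · exact ihv hz x (hz ▸ hxz.symm)
      · exact (Adj.reachable (by simpa using hxz)).trans (ihz hz)
    · rintro rfl w hw
      exact (hnbr w z hw hxz).trans (ihz hxz.ne')

theorem not_isCutVertex_of_forall_reachable [Finite V] {v : V}
    (hnbr : ∀ w₁ w₂ (h₁ : G.Adj v w₁) (h₂ : G.Adj v w₂),
      (G.induce {u | u ≠ v}).Reachable ⟨w₁, h₁.ne'⟩ ⟨w₂, h₂.ne'⟩) :
    ¬ G.IsCutVertex v := by
  have hinj : Function.Injective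
      (ConnectedComponent.map (Embedding.induce (G := G) {u | u ≠ v}).toHom) := by
    refine ConnectedComponent.ind₂ fun a b hab => ?_
    simp only [ConnectedComponent.map_mk, ConnectedComponent.eq] at hab ⊢
    obtain ⟨p⟩ := hab
    exact (reachable_induce_ne_of_walk hnbr b.2 p).1 a.2
  exact not_lt.2 (Nat.card_le_card_of_injective _ hinj)

end CutVertex

section ComponentAvoiding

variable [Fintype V]

open Classical in
/-- The vertex set of the component of `G - v` containing `u`; empty if `u = v`. -/
noncomputable def componentAvoiding (G : SimpleGraph V) (v u : V) : Finset V :=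
  {w | ∃ p : G.Walk w u, v ∉ p.support}

variable {v u w : V}

theorem mem_componentAvoiding :
    w ∈ G.componentAvoiding v u ↔ ∃ p : G.Walk w u, v ∉ p.support := by
  simp [componentAvoiding]

theorem self_mem_componentAvoiding (h : u ≠ v) : u ∈ G.componentAvoiding v u :=
  mem_componentAvoiding.2 ⟨.nil, by simpa using h.symm⟩

theorem not_mem_componentAvoiding_self : v ∉ G.componentAvoiding v u := fun h =>
  have ⟨p, hp⟩ := mem_componentAvoiding.1 h
  hp p.start_mem_support

theorem eq_of_adj_of_not_mem_componentAvoiding {x : V} (hw : w ∈ G.componentAvoiding v u)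
    (hadj : G.Adj w x) (hx : x ∉ G.componentAvoiding v u) : x = v := by
  by_contra hxv
  obtain ⟨p, hp⟩ := mem_componentAvoiding.1 hw
  exact hx (mem_componentAvoiding.2 ⟨p.cons hadj.symm, by simp [Ne.symm hxv, hp]⟩)

theorem connected_induce_componentAvoiding (hu : u ≠ v) :
    (G.induce (G.componentAvoiding v u : Set V)).Connected := by
  classical
  refine induce_connected_of_patches u (self_mem_componentAvoiding hu) fun {w} hw => ?_
  obtain ⟨p, hp⟩ := mem_componentAvoiding.1 hw
  refine ⟨{x | x ∈ p.support}, fun x hx => ?_, p.end_mem_support, p.start_mem_support,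
    p.connected_induce_support.preconnected _ _⟩
  exact mem_componentAvoiding.2
    ⟨p.dropUntil x hx, fun h => hp (p.support_dropUntil_subset_support hx h)⟩

theorem eq_of_componentAvoiding_eq {v' u' : V} (h : G.Adj v u)
    (heq : G.componentAvoiding v u = G.componentAvoiding v' u') : v = v' := by
  have hu : u ∈ G.componentAvoiding v' u' := heq ▸ self_mem_componentAvoiding h.ne'
  exact eq_of_adj_of_not_mem_componentAvoiding hu h.symm (heq ▸ not_mem_componentAvoiding_self)

theorem exists_componentAvoiding_ne_of_isCutVertex (hcut : G.IsCutVertex v) :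
    ∃ u₁ u₂, G.Adj v u₁ ∧ G.Adj v u₂ ∧
      G.componentAvoiding v u₁ ≠ G.componentAvoiding v u₂ := by
  by_contra! hsame
  refine not_isCutVertex_of_forall_reachable (fun w₁ w₂ h₁ h₂ => ?_) hcut
  obtain ⟨p, hp⟩ := mem_componentAvoiding.1
    (hsame w₁ w₂ h₁ h₂ ▸ self_mem_componentAvoiding (G := G) h₁.ne')
  exact ⟨p.induce _ fun x hx (hxv : x = v) => hp (hxv ▸ hx)⟩

end ComponentAvoiding

section Alliance

variable [Fintype V] [DecidableEq V] [DecidableRel G.Adj]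

theorem degIn_add_degOut (S : Finset V) (v : V) : G.degIn S v + G.degOut S v = G.degree v := by
  rw [degIn, degOut, ← card_union_of_disjoint (disjoint_filter_filter disjoint_compl_right),
    ← filter_union, union_compl, ← card_neighborFinset_eq_degree, neighborFinset_eq_filter]

theorem card_le_allianceCoeff {k : ℤ} {𝒜 : Finset (Finset V)}
    (h : ∀ S ∈ 𝒜, G.IsExactAlliance S k) : #𝒜 ≤ G.allianceCoeff k := by
  rw [← Set.ncard_coe_finset]
  exact Set.ncard_le_ncard h (Set.toFinite _)

theorem IsRegularOfDegree.isExactAlliance {Δ : ℕ} (hreg : G.IsRegularOfDegree Δ)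
    {S : Finset V} {d : ℤ} (hconn : (G.induce (S : Set V)).Connected)
    (hle : ∀ v ∈ S, (G.degOut S v : ℤ) ≤ d)
    (hattained : ∃ v ∈ S, (G.degOut S v : ℤ) = d) :
    G.IsExactAlliance S (Δ - 2 * d) := by
  have hdiff (v : V) : (G.degIn S v : ℤ) - G.degOut S v = Δ - 2 * G.degOut S v := by
    have := G.degIn_add_degOut S v
    rw [hreg v] at this
    omega
  obtain ⟨u, hu, hud⟩ := hattained
  exact ⟨hconn, fun v hv => by rw [hdiff]; linarith [hle v hv], u, hu, by rw [hdiff, hud]⟩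

theorem degIn_pair {a b : V} (h : G.Adj a b) : G.degIn {a, b} a = 1 := by
  rw [degIn, filter_insert, if_neg (G.loopless.irrefl a), filter_singleton, if_pos h,
    card_singleton]

theorem IsRegularOfDegree.isExactAlliance_pair {Δ : ℕ} (hreg : G.IsRegularOfDegree Δ) {a b : V}
    (h : G.Adj a b) : G.IsExactAlliance {a, b} (-(Δ : ℤ) + 2) := by
  have hdegOut : ∀ x ∈ ({a, b} : Finset V), (G.degOut {a, b} x : ℤ) = Δ - 1 := by
    simp only [mem_insert, mem_singleton]
    rintro x (rfl | rfl)
    · have := G.degIn_add_degOut {x, b} x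
      rw [degIn_pair h, hreg x] at this
      omega
    · have := G.degIn_add_degOut {a, x} x
      rw [pair_comm, degIn_pair h.symm, hreg x] at this
      rw [pair_comm]
      omega
  convert hreg.isExactAlliance ?_ (fun x hx => (hdegOut x hx).le)
    ⟨a, mem_insert_self a {b}, hdegOut a (mem_insert_self a {b})⟩ using 1
  · ring
  · rw [coe_pair]
    exact induce_pair_connected_of_adj h

theorem IsRegularOfDegree.card_edgeFinset_le_allianceCoeff {Δ : ℕ}
    (hreg : G.IsRegularOfDegree Δ) : #G.edgeFinset ≤ G.allianceCoeff (-(Δ : ℤ) + 2) := by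
  rw [← card_image_of_injective _ Sym2.toFinset_injective]
  refine card_le_allianceCoeff ?_
  simp only [mem_image, mem_edgeFinset]
  rintro _ ⟨e, he, rfl⟩
  induction e using Sym2.ind with
  | _ a b =>
    rw [Sym2.toFinset_mk_eq]
    exact hreg.isExactAlliance_pair he

variable {v u w : V}

theorem degOut_componentAvoiding_le_one (hw : w ∈ G.componentAvoiding v u) :
    G.degOut (G.componentAvoiding v u) w ≤ 1 := by
  refine (card_le_card fun x hx => ?_).trans (card_singleton v).le
  rw [mem_filter, mem_compl] at hx
  exact mem_singleton.2 (eq_of_adj_of_not_mem_componentAvoiding hw hx.2 hx.1)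

theorem degOut_componentAvoiding_self (h : G.Adj v u) :
    G.degOut (G.componentAvoiding v u) u = 1 :=
  le_antisymm (degOut_componentAvoiding_le_one (self_mem_componentAvoiding h.ne')) <|
    card_pos.2 ⟨v, mem_filter.2 ⟨mem_compl.2 not_mem_componentAvoiding_self, h.symm⟩⟩

theorem IsRegularOfDegree.isExactAlliance_componentAvoiding {Δ : ℕ}
    (hreg : G.IsRegularOfDegree Δ) (h : G.Adj v u) :
    G.IsExactAlliance (G.componentAvoiding v u) ((Δ : ℤ) - 2) := by
  have hu := self_mem_componentAvoiding (G := G) h.ne'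
  convert hreg.isExactAlliance (d := 1) (connected_induce_componentAvoiding h.ne')
    (fun w hw => by exact_mod_cast degOut_componentAvoiding_le_one hw)
    ⟨u, hu, by exact_mod_cast degOut_componentAvoiding_self h⟩ using 1
  ring

variable (G) in
noncomputable def componentsAvoiding (v : V) : Finset (Finset V) :=
  (G.neighborFinset v).image (G.componentAvoiding v)

theorem disjoint_componentsAvoiding {v' : V} (hvv' : v ≠ v') :
    Disjoint (G.componentsAvoiding v) (G.componentsAvoiding v') := by
  rw [Finset.disjoint_left]
  rintro _ hS hS'
  obtain ⟨u, hu, rfl⟩ := mem_image.1 hS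
  obtain ⟨u', -, heq⟩ := mem_image.1 hS'
  exact hvv' (eq_of_componentAvoiding_eq ((mem_neighborFinset _ _ _).1 hu) heq.symm)

theorem one_le_card_componentsAvoiding (h : G.Adj v u) : 1 ≤ #(G.componentsAvoiding v) :=
  card_pos.2 ⟨_, mem_image_of_mem _ ((mem_neighborFinset _ _ _).2 h)⟩

theorem two_le_card_componentsAvoiding (hcut : G.IsCutVertex v) :
    2 ≤ #(G.componentsAvoiding v) := by
  obtain ⟨u₁, u₂, h₁, h₂, hne⟩ := exists_componentAvoiding_ne_of_isCutVertex hcut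
  rw [← card_pair hne]
  refine card_le_card (insert_subset ?_ (singleton_subset_iff.2 ?_)) <;>
    exact mem_image_of_mem (G.componentAvoiding v) ((mem_neighborFinset _ _ _).2 ‹_›)

theorem IsRegularOfDegree.card_add_ncard_isCutVertex_le_allianceCoeff {Δ : ℕ}
    (hreg : G.IsRegularOfDegree Δ) (hΔ : 0 < Δ) :
    Fintype.card V + {v | G.IsCutVertex v}.ncard ≤ G.allianceCoeff ((Δ : ℤ) - 2) := by
  classical
  have hcount (v : V) : 1 + (if G.IsCutVertex v then 1 else 0) ≤ #(G.componentsAvoiding v) := by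
    obtain ⟨u, hu⟩ := (G.degree_pos_iff_exists_adj v).1 (hreg v ▸ hΔ)
    split_ifs with hcut
    exacts [two_le_card_componentsAvoiding hcut, one_le_card_componentsAvoiding hu]
  calc Fintype.card V + {v | G.IsCutVertex v}.ncard
      = ∑ v, (1 + if G.IsCutVertex v then 1 else 0) := by
        rw [sum_add_distrib, sum_const, card_univ, smul_eq_mul, mul_one, sum_boole, Nat.cast_id,
          Set.ncard_eq_toFinset_card', Set.toFinset_ofPred]
    _ ≤ ∑ v, #(G.componentsAvoiding v) := sum_le_sum fun v _ => hcount v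
    _ = #(univ.biUnion G.componentsAvoiding) :=
        (card_biUnion fun _ _ _ _ => disjoint_componentsAvoiding).symm
    _ ≤ G.allianceCoeff ((Δ : ℤ) - 2) := by
        refine card_le_allianceCoeff fun S hS => ?_
        simp only [mem_biUnion, componentsAvoiding, mem_image, mem_neighborFinset] at hS
        obtain ⟨v, -, u, hu, rfl⟩ := hS
        exact hreg.isExactAlliance_componentAvoiding hu

end Alliance

end SimpleGraph

/-- For a Δ-regular graph with Δ > 0, order `n`, size `m` and `n₀` cut vertices:
`A_{-Δ+2}(G) ≥ m` and `A_{Δ-2}(G) ≥ n + n₀`; in particular `A_{Δ-2}(G) ≥ n`. -/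
theorem allianceCoeff_bounds_of_regular
    {V : Type*} [Fintype V] [DecidableEq V]
    (G : SimpleGraph V) [DecidableRel G.Adj] (Δ : ℕ) (hΔ : 0 < Δ)
    (hreg : G.IsRegularOfDegree Δ) :
    G.edgeFinset.card ≤ G.allianceCoeff (-(Δ : ℤ) + 2) ∧
    Fintype.card V + Set.ncard {v : V | G.IsCutVertex v} ≤ G.allianceCoeff ((Δ : ℤ) - 2) ∧
    Fintype.card V ≤ G.allianceCoeff ((Δ : ℤ) - 2) := by
  have hcut := hreg.card_add_ncard_isCutVertex_le_allianceCoeff hΔ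
  exact ⟨hreg.card_edgeFinset_le_allianceCoeff, hcut, (Nat.le_add_right _ _).trans hcut⟩
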